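/- For the macroscopic coupling rates c_N and the coverage observable partitioned into classes k ∈ {1,2,3} (increment negative, zero, positive), the goal-oriented functional evaluates to F[c_N; f] = ∑_{k∈{1,3}} min(λ^A_k(σ), λ^B_k(η)). -/

import Mathlib

/-!
The double sum against the two increments factorizes class by class: the `k`-th term is
`min(λ^A_k, λ^B_k)` times the `c_A`-weighted mean increment of class `k` under `σ` times the
`c_B`-weighted one under `η`. The increment is constant on a class, so these means are `-1`,
`0` or `+1`; when a class has total rate `0` the mean is junk, but then the minimum vanishes.
-/

open Finset

theorem Finset.sum_mul_eq_mul_sum_of_eqOn {α : Type*} {S : Finset α} {c d : α → ℝ} {ε : ℝ}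
    (hd : ∀ p ∈ S, d p = ε) : ∑ p ∈ S, c p * d p = ε * ∑ p ∈ S, c p := by
  rw [mul_sum]
  exact sum_congr rfl fun p hp => by rw [hd p hp, mul_comm]

theorem min_mul_mul_div_mul_mul_div {a b : ℝ} (ha : 0 ≤ a) (hb : 0 ≤ b) (s t : ℝ) :
    min a b * (s * a / a) * (t * b / b) = min a b * s * t := by
  rcases ha.eq_or_lt with rfl | ha
  · simp [min_eq_left hb]
  rcases hb.eq_or_lt with rfl | hb
  · simp [min_eq_right ha.le]
  · rw [mul_div_cancel_right₀ s ha.ne', mul_div_cancel_right₀ t hb.ne']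

theorem Finset.sum_div_mul_indicator_mul {α : Type*} [Fintype α] [DecidableEq α]
    (S : Finset α) (c d : α → ℝ) (L : ℝ) :
    ∑ p, c p / L * (if p ∈ S then 1 else 0) * d p = (∑ p ∈ S, c p * d p) / L := by
  simp only [mul_ite, ite_mul, mul_one, mul_zero, zero_mul, sum_ite_mem, univ_inter, sum_div]
  exact sum_congr rfl fun p _ => by ring

theorem sum_sum_coupling_mul_eq_sum_mul_mul {α β ι : Type*} [Fintype α] [Fintype β]
    [Fintype ι] [DecidableEq α] [DecidableEq β] (m LA LB : ι → ℝ)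
    (SA : ι → Finset α) (SB : ι → Finset β) (cA dA : α → ℝ) (cB dB : β → ℝ) :
    ∑ p, ∑ q, (∑ k, m k * (cA p / LA k) * (cB q / LB k)
        * (if p ∈ SA k then 1 else 0) * (if q ∈ SB k then 1 else 0)) * dA p * dB q
      = ∑ k, m k * ((∑ p ∈ SA k, cA p * dA p) / LA k)
          * ((∑ q ∈ SB k, cB q * dB q) / LB k) := by
  have hsplit : ∀ p q k, m k * (cA p / LA k) * (cB q / LB k)
      * (if p ∈ SA k then 1 else 0) * (if q ∈ SB k then 1 else 0) * dA p * dB q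
      = m k * (cA p / LA k * (if p ∈ SA k then 1 else 0) * dA p)
          * (cB q / LB k * (if q ∈ SB k then 1 else 0) * dB q) := fun p q k => by ring
  simp only [sum_mul, hsplit]
  rw [sum_congr rfl fun p _ => sum_comm, sum_comm]
  simp only [← sum_div_mul_indicator_mul, mul_assoc, ← mul_sum, sum_mul_sum]

theorem macroscopic_functional_value_general
    {Λ Ω : Type*} [Fintype Λ] [Fintype Ω] [DecidableEq (Λ × Ω)]
    (cA cB : Λ × Ω → ℝ) (hcA : ∀ p, 0 ≤ cA p) (hcB : ∀ p, 0 ≤ cB p)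
    (SA SB : Fin 3 → Finset (Λ × Ω))
    -- normalized observable increments for the two processes
    (dA dB : Λ × Ω → ℝ)
    (hdA0 : ∀ p ∈ SA 0, dA p = -1) (hdA1 : ∀ p ∈ SA 1, dA p = 0)
    (hdA2 : ∀ p ∈ SA 2, dA p = 1)
    (hdB0 : ∀ q ∈ SB 0, dB q = -1)
    (hdB2 : ∀ q ∈ SB 2, dB q = 1) :
    ∑ p : Λ × Ω, ∑ q : Λ × Ω,
        (∑ k : Fin 3,
          min (∑ p' ∈ SA k, cA p') (∑ q' ∈ SB k, cB q')
            * (cA p / ∑ p' ∈ SA k, cA p') * (cB q / ∑ q' ∈ SB k, cB q')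
            * (if p ∈ SA k then 1 else 0) * (if q ∈ SB k then 1 else 0))
        * dA p * dB q
      = min (∑ p' ∈ SA 0, cA p') (∑ q' ∈ SB 0, cB q')
        + min (∑ p' ∈ SA 2, cA p') (∑ q' ∈ SB 2, cB q') := by
  have hLA : ∀ k, 0 ≤ ∑ p ∈ SA k, cA p := fun k => sum_nonneg fun p _ => hcA p
  have hLB : ∀ k, 0 ≤ ∑ q ∈ SB k, cB q := fun k => sum_nonneg fun q _ => hcB q
  rw [sum_sum_coupling_mul_eq_sum_mul_mul, Fin.sum_univ_three,
    sum_mul_eq_mul_sum_of_eqOn hdA0, sum_mul_eq_mul_sum_of_eqOn hdA1,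
    sum_mul_eq_mul_sum_of_eqOn hdA2, sum_mul_eq_mul_sum_of_eqOn hdB0,
    sum_mul_eq_mul_sum_of_eqOn hdB2,
    min_mul_mul_div_mul_mul_div (hLA 0) (hLB 0), min_mul_mul_div_mul_mul_div (hLA 2) (hLB 2)]
  simp

/-- For the macroscopic coupling rates `c_N` and the coverage observable with
transitions classified by the sign of the (normalized) observable increment
(class 0: increment −1, class 1: increment 0, class 2: increment +1), the
goal-oriented functional evaluates to
`F[c_N; f] = ∑_{k ∈ {negative, positive}} min(λ^A_k, λ^B_k)`. -/
theorem macroscopic_functional_value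
    {Λ Ω : Type*} [Fintype Λ] [Fintype Ω] [DecidableEq (Λ × Ω)]
    (cA cB : Λ × Ω → ℝ) (hcA : ∀ p, 0 ≤ cA p) (hcB : ∀ p, 0 ≤ cB p)
    (SA SB : Fin 3 → Finset (Λ × Ω))
    (hSAdisj : ∀ k k', k ≠ k' → Disjoint (SA k) (SA k'))
    (hSBdisj : ∀ k k', k ≠ k' → Disjoint (SB k) (SB k'))
    (hSAcover : ∀ p, cA p ≠ 0 → ∃ k, p ∈ SA k)
    (hSBcover : ∀ q, cB q ≠ 0 → ∃ k, q ∈ SB k)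
    -- normalized observable increments for the two processes
    (dA dB : Λ × Ω → ℝ)
    (hdA0 : ∀ p ∈ SA 0, dA p = -1) (hdA1 : ∀ p ∈ SA 1, dA p = 0)
    (hdA2 : ∀ p ∈ SA 2, dA p = 1)
    (hdB0 : ∀ q ∈ SB 0, dB q = -1) (hdB1 : ∀ q ∈ SB 1, dB q = 0)
    (hdB2 : ∀ q ∈ SB 2, dB q = 1) :
    ∑ p : Λ × Ω, ∑ q : Λ × Ω,
        (∑ k : Fin 3,
          min (∑ p' ∈ SA k, cA p') (∑ q' ∈ SB k, cB q')
            * (cA p / ∑ p' ∈ SA k, cA p') * (cB q / ∑ q' ∈ SB k, cB q')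
            * (if p ∈ SA k then 1 else 0) * (if q ∈ SB k then 1 else 0))
        * dA p * dB q
      = min (∑ p' ∈ SA 0, cA p') (∑ q' ∈ SB 0, cB q')
        + min (∑ p' ∈ SA 2, cA p') (∑ q' ∈ SB 2, cB q') :=
  macroscopic_functional_value_general cA cB hcA hcB SA SB dA dB hdA0 hdA1 hdA2 hdB0 hdB2
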